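/- Let ε ∈ {1, −1}, let ν be a nonnegative integer, let α be a positive integer, and let x ∈ ℤ. Then for every prime p, the function n ↦ ε^n·(n+ν)!·{[(n+ν)^3 + 1]·x^{3α} − 7ε·x^{2α} + 6·x^α − ε}·x^{αn}, with values viewed in ℚ_p, has sum −ε·ν!·[(ν^2 − 3ν + 3)·x^{2α} + (ν − 5)·ε·x^α + 1] in ℚ_p. -/

import Mathlib

/-!
The summand is the forward difference `g n - g (n + 1)` of
`g n = ε ^ n (n + ν)! (-ε ((n + ν) ^ 2 - 3 (n + ν) + 3) y ^ 2 + (5 - (n + ν)) y - ε) y ^ n`,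
`y = x ^ α`. Since `(n + ν)!` divides `g n`, and `p ^ ⌊n / p⌋`
divides `n!`, the sequence `g n` tends to `0` in `ℚ_p`, so the series telescopes to `g 0`.
-/

open Filter Topology Nat

section Telescoping

variable {R : Type*} [CommRing R] (ε y : R) (ν : ℕ)

def summandPrimitive (n : ℕ) : R :=
  ε ^ n * (n + ν)! * (-ε * (((n + ν : ℕ) : R) ^ 2 - 3 * (n + ν : ℕ) + 3) * y ^ 2 +
    (5 - (n + ν : ℕ)) * y - ε) * y ^ n

theorem summandPrimitive_sub_succ {ε} (hε : ε ^ 2 = 1) (n : ℕ) :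
    summandPrimitive ε y ν n - summandPrimitive ε y ν (n + 1) =
      ε ^ n * (n + ν)! * ((((n + ν : ℕ) : R) ^ 3 + 1) * y ^ 3 - 7 * ε * y ^ 2 + 6 * y - ε) *
        y ^ n := by
  rw [summandPrimitive, summandPrimitive, Nat.add_right_comm, factorial_succ, Nat.cast_mul,
    Nat.cast_succ]
  generalize ((n + ν : ℕ) : R) = m
  linear_combination ε ^ n * (n + ν)! * y ^ (n + 1) * (m + 1) * ((m ^ 2 - m + 1) * y ^ 2 + 1) * hε

theorem natCast_factorial_dvd_summandPrimitive (n : ℕ) :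
    (n ! : R) ∣ summandPrimitive ε y ν n :=
  ((((Nat.cast_dvd_cast (factorial_dvd_factorial (Nat.le_add_right n ν))).mul_left _).mul_right
    _).mul_right _)

end Telescoping

theorem Nat.Prime.pow_div_dvd_factorial {p : ℕ} (hp : p.Prime) (n : ℕ) : p ^ (n / p) ∣ n ! := by
  have := Fact.mk hp
  have hval : n / p ≤ padicValNat p (p * (n / p))! := by
    rw [padicValNat_factorial_mul]
    exact le_add_self
  exact (Nat.pow_dvd_pow p hval).trans
    (pow_padicValNat_dvd.trans (factorial_dvd_factorial (Nat.mul_div_le n p)))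

theorem Padic.tendsto_intCast_zero_of_factorial_dvd {p : ℕ} [hp : Fact p.Prime] {b : ℕ → ℤ}
    (hb : ∀ n, (n ! : ℤ) ∣ b n) : Tendsto (fun n => (b n : ℚ_[p])) atTop (𝓝 0) := by
  have hnorm : ∀ n, ‖(b n : ℚ_[p])‖ ≤ (p : ℝ)⁻¹ ^ (n / p) := fun n => by
    rw [inv_pow, ← zpow_natCast, ← zpow_neg, Padic.norm_int_le_pow_iff_dvd]
    exact (Int.natCast_dvd_natCast.mpr (hp.out.pow_div_dvd_factorial n)).trans (by
      exact_mod_cast hb n)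
  have hgeom : Tendsto (fun n => (p : ℝ)⁻¹ ^ (n / p)) atTop (𝓝 0) :=
    (tendsto_pow_atTop_nhds_zero_of_lt_one (by positivity)
      (inv_lt_one_of_one_lt₀ (mod_cast hp.out.one_lt))).comp
      (Nat.tendsto_div_const_atTop hp.out.ne_zero)
  exact tendsto_zero_iff_norm_tendsto_zero.mpr
    (squeeze_zero (fun n => norm_nonneg _) hnorm hgeom)

theorem NonarchimedeanAddGroup.hasSum_sub_succ {G : Type*} [AddCommGroup G] [UniformSpace G]
    [IsUniformAddGroup G] [NonarchimedeanAddGroup G] [CompleteSpace G] [T2Space G] {f : ℕ → G}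
    (hf : Tendsto f atTop (𝓝 0)) : HasSum (fun n => f n - f (n + 1)) (f 0) := by
  have hterm : Tendsto (fun n => f n - f (n + 1)) atTop (𝓝 0) := by
    simpa using hf.sub (hf.comp (tendsto_add_atTop_nat 1))
  have hsum := NonarchimedeanAddGroup.summable_of_tendsto_cofinite_zero
    (Nat.cofinite_eq_atTop ▸ hterm)
  rw [hsum.hasSum_iff_tendsto_nat]
  simp_rw [Finset.sum_range_sub']
  simpa using tendsto_const_nhds.sub hf

theorem stmt_18_general (ε : ℤ) (hε : ε = 1 ∨ ε = -1) (ν : ℕ) (α : ℕ)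
    (x : ℤ) (p : ℕ) [Fact (Nat.Prime p)] :
    HasSum
      (fun n : ℕ =>
        ((ε ^ n * ((n + ν).factorial : ℤ) *
            ((((n : ℤ) + ν) ^ 3 + 1) * x ^ (3 * α) - 7 * ε * x ^ (2 * α) +
              6 * x ^ α - ε) * x ^ (α * n) : ℤ) : ℚ_[p]))
      ((-ε * (ν.factorial : ℤ) *
          (((ν : ℤ) ^ 2 - 3 * ν + 3) * x ^ (2 * α) + ((ν : ℤ) - 5) * ε * x ^ α + 1) :
        ℤ) : ℚ_[p]) := by
  have hε2 : ε ^ 2 = 1 := by rcases hε with rfl | rfl <;> norm_num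
  let g : ℕ → ℤ := summandPrimitive ε (x ^ α) ν
  have hsum : HasSum (fun n => (g n : ℚ_[p]) - g (n + 1)) (g 0) :=
    NonarchimedeanAddGroup.hasSum_sub_succ <| Padic.tendsto_intCast_zero_of_factorial_dvd <|
      natCast_factorial_dvd_summandPrimitive _ _ _
  convert hsum using 2 with n
  · rw [← Int.cast_sub, summandPrimitive_sub_succ _ _ hε2, mul_comm 3 α, mul_comm 2 α,
      pow_mul, pow_mul, pow_mul]
    push_cast
    ring
  · simp only [g, summandPrimitive, zero_add]
    linear_combination (ν ! * (5 - ν) * x ^ α) * hε2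

theorem stmt_18 (ε : ℤ) (hε : ε = 1 ∨ ε = -1) (ν : ℕ) (α : ℕ) (hα : 0 < α)
    (x : ℤ) (p : ℕ) [Fact (Nat.Prime p)] :
    HasSum
      (fun n : ℕ =>
        ((ε ^ n * ((n + ν).factorial : ℤ) *
            ((((n : ℤ) + ν) ^ 3 + 1) * x ^ (3 * α) - 7 * ε * x ^ (2 * α) +
              6 * x ^ α - ε) * x ^ (α * n) : ℤ) : ℚ_[p]))
      ((-ε * (ν.factorial : ℤ) *
          (((ν : ℤ) ^ 2 - 3 * ν + 3) * x ^ (2 * α) + ((ν : ℤ) - 5) * ε * x ^ α + 1) :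
        ℤ) : ℚ_[p]) :=
  stmt_18_general ε hε ν α x p
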